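/- Let 2 ≤ t ≤ k < n and r ≥ 1. Suppose B is a Steiner system S(t,k,n) on the point set Z_n, and B is partitioned into r pairwise disjoint subcollections T_1, …, T_r such that each T_j is a Steiner system S(t−1,k,n) on Z_n. Then there exists a mixed Steiner system MS(t, k+1, Z_2^n × Z_{r+1}). -/
import Mathlib

open Finset

lemma distSum {α β : Type*} [Fintype α] [Fintype β] (f g : α ⊕ β → ℕ) :
    hammingDist f g =
      hammingDist (f ∘ Sum.inl) (g ∘ Sum.inl) + hammingDist (f ∘ Sum.inr) (g ∘ Sum.inr) := by
  classical
  unfold hammingDist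
  rw [Finset.card_filter, Finset.card_filter, Finset.card_filter, Fintype.sum_sum_type]
  rfl

lemma normSum {α β : Type*} [Fintype α] [Fintype β] (f : α ⊕ β → ℕ) :
    hammingNorm f = hammingNorm (f ∘ Sum.inl) + hammingNorm (f ∘ Sum.inr) := by
  rw [← hammingDist_zero_right, ← hammingDist_zero_right, ← hammingDist_zero_right]
  exact distSum f 0

lemma hamDistUnit (f g : Unit → ℕ) : hammingDist f g = if f () ≠ g () then 1 else 0 := by
  unfold hammingDist
  rw [show (univ : Finset Unit) = {()} from rfl, Finset.filter_singleton]
  split <;> simp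

lemma hamNormUnit (f : Unit → ℕ) : hammingNorm f = if f () ≠ 0 then 1 else 0 := by
  rw [← hammingDist_zero_right, hamDistUnit]; rfl

noncomputable def ind {n : ℕ} (b : Finset (Fin n)) : Fin n → ℕ := fun i => if i ∈ b then 1 else 0

lemma normInd {n : ℕ} (b : Finset (Fin n)) : hammingNorm (ind b) = b.card := by
  unfold hammingNorm ind
  congr 1
  ext i
  by_cases h : i ∈ b <;> simp [h]

lemma distInd {n : ℕ} (b b' : Finset (Fin n)) :
    hammingDist (ind b) (ind b') = (b \ b').card + (b' \ b).card := by
  unfold hammingDist ind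
  rw [← Finset.card_union_of_disjoint disjoint_sdiff_sdiff]
  congr 1
  ext i
  by_cases h : i ∈ b <;> by_cases h' : i ∈ b' <;> simp [h, h']

lemma distXInd {n : ℕ} (x : Fin n → ℕ) (hx : ∀ i, x i < 2) (b : Finset (Fin n))
    (hsub : (univ.filter fun i => x i ≠ 0) ⊆ b) :
    hammingDist x (ind b) = (b \ (univ.filter fun i => x i ≠ 0)).card := by
  unfold hammingDist ind
  congr 1
  ext i
  have := hx i
  have hs := @hsub i
  by_cases h : i ∈ b <;> simp [h] at hs ⊢ <;> omega

lemma interBound {n t : ℕ} (BB : Set (Finset (Fin n)))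
    (h : ∀ s : Finset (Fin n), s.card = t → ∃! b, b ∈ BB ∧ s ⊆ b)
    {b b' : Finset (Fin n)} (hb : b ∈ BB) (hb' : b' ∈ BB) (hne : b ≠ b') :
    (b ∩ b').card < t := by
  by_contra hc
  push_neg at hc
  obtain ⟨s, hs, hcard⟩ := Finset.exists_subset_card_eq hc
  obtain ⟨c, _, huniq⟩ := h s hcard
  exact hne ((huniq b ⟨hb, hs.trans inter_subset_left⟩).trans
    (huniq b' ⟨hb', hs.trans inter_subset_right⟩).symm)

/-- A mixed Steiner system MS(t,k,Q) over the mixed alphabet described by `q : ι → ℕ`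
(words are functions `x : ι → ℕ` with `x i < q i`): a set `C` of words of Hamming
weight `k` such that every word of Hamming weight `t` is at Hamming distance exactly
`k - t` from exactly one codeword, and distinct codewords are at Hamming distance at
least `2(k-t)+1`. -/
def IsMixedSteiner {ι : Type*} [Fintype ι] [DecidableEq ι] (q : ι → ℕ) (t k : ℕ)
    (C : Set (ι → ℕ)) : Prop :=
  (∀ c ∈ C, (∀ i, c i < q i) ∧ hammingNorm c = k) ∧
  (∀ x : ι → ℕ, (∀ i, x i < q i) → hammingNorm x = t →
    ∃! c, c ∈ C ∧ hammingDist x c = k - t) ∧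
  (∀ c ∈ C, ∀ c' ∈ C, c ≠ c' → 2 * (k - t) + 1 ≤ hammingDist c c')

/-- A Steiner system S(t,k,n) on the point set `Fin n`: a collection of `k`-subsets
such that every `t`-subset is contained in exactly one block. -/
def IsSteinerSystem (n t k : ℕ) (B : Set (Finset (Fin n))) : Prop :=
  (∀ b ∈ B, b.card = k) ∧
  ∀ s : Finset (Fin n), s.card = t → ∃! b, b ∈ B ∧ s ⊆ b

theorem stmt12 {n : ℕ} (t k r : ℕ) (ht : 2 ≤ t) (htk : t ≤ k) (hkn : k < n)
    (hr : 1 ≤ r)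
    (B : Set (Finset (Fin n))) (hB : IsSteinerSystem n t k B)
    (T : Fin r → Set (Finset (Fin n)))
    (hTdisj : ∀ i j, i ≠ j → Disjoint (T i) (T j))
    (hTunion : (⋃ i, T i) = B)
    (hTsteiner : ∀ i, IsSteinerSystem n (t - 1) k (T i)) :
    ∃ C : Set (Fin n ⊕ Unit → ℕ),
      IsMixedSteiner (Sum.elim (fun _ => 2) (fun _ => r + 1)) t (k + 1) C := by
  classical
  -- the codeword associated to a block and the index of its part
  set code : Finset (Fin n) → Fin r → (Fin n ⊕ Unit → ℕ) :=
    fun b j => Sum.elim (ind b) (fun _ : Unit => (j : ℕ) + 1) with hcode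
  refine ⟨{c | ∃ j : Fin r, ∃ b ∈ T j, c = code b j}, ?_⟩
  have hmem : ∀ j : Fin r, ∀ b ∈ T j, b ∈ B := by
    intro j b hb
    rw [← hTunion]
    exact Set.mem_iUnion.mpr ⟨j, hb⟩
  have hcard : ∀ j : Fin r, ∀ b ∈ T j, b.card = k := fun j b hb => hB.1 b (hmem j b hb)
  -- distance between distinct codewords
  have hmin : ∀ (j j' : Fin r) (b b' : Finset (Fin n)), b ∈ T j → b' ∈ T j' →
      code b j ≠ code b' j' →
      2 * ((k + 1) - t) + 1 ≤ hammingDist (code b j) (code b' j') := by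
    intro j j' b b' hb hb' hne
    have hbne : b ≠ b' := by
      rintro rfl
      have hjj : j ≠ j' := by
        rintro rfl; exact hne rfl
      exact (hTdisj j j' hjj).ne_of_mem hb hb' rfl
    have h1 : (b \ b').card + (b ∩ b').card = b.card := Finset.card_sdiff_add_card_inter b b'
    have h2 : (b' \ b).card + (b' ∩ b).card = b'.card := Finset.card_sdiff_add_card_inter b' b
    rw [Finset.inter_comm] at h2
    have hcb : b.card = k := hcard j b hb
    have hcb' : b'.card = k := hcard j' b' hb'
    rw [distSum, hcode]
    have hinl : hammingDist (Sum.elim (ind b) (fun _ : Unit => (j:ℕ)+1) ∘ Sum.inl)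
        (Sum.elim (ind b') (fun _ : Unit => (j':ℕ)+1) ∘ Sum.inl) = (b \ b').card + (b' \ b).card :=
      distInd b b'
    rw [hinl, hamDistUnit]
    by_cases hjj : j = j'
    · subst hjj
      have hint : (b ∩ b').card < t - 1 :=
        interBound (T j) (hTsteiner j).2 hb hb' hbne
      simp only [Function.comp, Sum.elim_inr]
      omega
    · have hint : (b ∩ b').card < t :=
        interBound B hB.2 (hmem j b hb) (hmem j' b' hb') hbne
      have hvals : ((j:ℕ) + 1) ≠ ((j':ℕ) + 1) := fun h => hjj (Fin.ext (by omega))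
      simp only [Function.comp, Sum.elim_inr, hvals, if_pos, ne_eq, not_false_iff]
      omega
  refine ⟨?_, ?_, ?_⟩
  · -- codewords: bounds and weight
    rintro c ⟨j, b, hb, rfl⟩
    constructor
    · rintro (i | i)
      · simp only [hcode, Sum.elim_inl, Sum.elim_inr, ind]
        split <;> omega
      · simp only [hcode, Sum.elim_inr]
        omega
    · rw [normSum]
      have : hammingNorm (code b j ∘ Sum.inl) = b.card := normInd b
      rw [this, hcard j b hb]
      have : hammingNorm (code b j ∘ Sum.inr) = 1 := by
        rw [hamNormUnit]; simp [hcode]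
      rw [this]
  · -- every weight-t word covered exactly once
    intro x hxlt hxt
    set S : Finset (Fin n) := univ.filter fun i => x (Sum.inl i) ≠ 0 with hS
    have hxinl : ∀ i, x (Sum.inl i) < 2 := fun i => hxlt (Sum.inl i)
    have hnorm : hammingNorm x = S.card + (if x (Sum.inr ()) ≠ 0 then 1 else 0) := by
      rw [normSum, hamNormUnit]
      rfl
    -- existence of a suitable codeword, handled in two cases
    have key : ∃ c, (∃ j : Fin r, ∃ b ∈ T j, c = code b j) ∧ hammingDist x c = (k + 1) - t := by
      by_cases hv : x (Sum.inr ()) = 0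
      · -- last coordinate zero: S has size t
        have hScard : S.card = t := by rw [hxt] at hnorm; simp [hv] at hnorm; omega
        obtain ⟨b, ⟨hbB, hSb⟩, _⟩ := hB.2 S hScard
        have hbU : b ∈ ⋃ i, T i := by rw [hTunion]; exact hbB
        obtain ⟨j, hj⟩ := Set.mem_iUnion.mp hbU
        refine ⟨code b j, ⟨j, b, hj, rfl⟩, ?_⟩
        rw [distSum]
        have h1 : hammingDist (x ∘ Sum.inl) (code b j ∘ Sum.inl) = (b \ S).card :=
          distXInd (x ∘ Sum.inl) hxinl b hSb
        have h2 : hammingDist (x ∘ Sum.inr) (code b j ∘ Sum.inr) = 1 := by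
          rw [hamDistUnit]
          simp [hcode, hv]
        rw [h1, h2, Finset.card_sdiff_of_subset hSb, hB.1 b hbB, hScard]
        omega
      · -- last coordinate nonzero, say v; S has size t - 1
        have hScard : S.card = t - 1 := by rw [hxt] at hnorm; simp [hv] at hnorm; omega
        have hvlt : x (Sum.inr ()) < r + 1 := hxlt (Sum.inr ())
        set j : Fin r := ⟨x (Sum.inr ()) - 1, by omega⟩ with hj
        obtain ⟨b, ⟨hbT, hSb⟩, _⟩ := (hTsteiner j).2 S hScard
        refine ⟨code b j, ⟨j, b, hbT, rfl⟩, ?_⟩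
        rw [distSum]
        have h1 : hammingDist (x ∘ Sum.inl) (code b j ∘ Sum.inl) = (b \ S).card :=
          distXInd (x ∘ Sum.inl) hxinl b hSb
        have h2 : hammingDist (x ∘ Sum.inr) (code b j ∘ Sum.inr) = 0 := by
          rw [hamDistUnit]
          have : (j : ℕ) + 1 = x (Sum.inr ()) := by simp [hj]; omega
          simp [hcode, this]
        rw [h1, h2, Finset.card_sdiff_of_subset hSb, hcard j b hbT, hScard]
        omega
    obtain ⟨c, hcC, hcd⟩ := key
    refine ⟨c, ⟨hcC, hcd⟩, ?_⟩
    rintro c' ⟨⟨j', b', hb', rfl⟩, hcd'⟩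
    obtain ⟨j, b, hb, rfl⟩ := hcC
    by_contra hne
    have htri : hammingDist (code b' j') (code b j) ≤
        hammingDist (code b' j') x + hammingDist x (code b j) := hammingDist_triangle _ _ _
    rw [hammingDist_comm (code b' j') x] at htri
    have := hmin j' j b' b hb' hb hne
    omega
  · -- minimum distance
    rintro c ⟨j, b, hb, rfl⟩ c' ⟨j', b', hb', rfl⟩ hne
    exact hmin j j' b b' hb hb' hne
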